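/- arXiv:1507.07105 — 2 statements merged into one kernel-verified Lean document; each statement's English description precedes it below -/
import Mathlib

section
/- Let A ∈ ℝ^{p×N}, T a subset of column indices, y ∈ ℝ^p, and suppose there exists a vector c with support S ⊆ T such that y = A c, together with a dual certificate ν ∈ ℝ^p satisfying: (i) A_Sᵀ ν = sgn(c_S), (ii) ‖A_{T∩Sᶜ}ᵀ ν‖_∞ ≤ 1, and (iii) ‖A_{Tᶜ}ᵀ ν‖_∞ < 1. Then every solution c* of the ℓ₁-minimization problem min_z ‖z‖₁ subject to A z = y satisfies c*_{Tᶜ} = 0. -/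
open Matrix

/-- Lemma of Tropp/Fuchs type: a dual certificate forces every ℓ₁-minimizer
to be supported on `T`. -/
theorem stmt12 {p N : ℕ} (A : Matrix (Fin p) (Fin N) ℝ) (T : Set (Fin N))
    (c : Fin N → ℝ) (ν : Fin p → ℝ)
    (hsupp : ∀ i, c i ≠ 0 → i ∈ T)
    (h1 : ∀ i, c i ≠ 0 → ∑ r, A r i * ν r = Real.sign (c i))
    (h2 : ∀ i ∈ T, c i = 0 → |∑ r, A r i * ν r| ≤ 1)
    (h3 : ∀ i ∉ T, |∑ r, A r i * ν r| < 1)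
    (cstar : Fin N → ℝ)
    (hfeas : A.mulVec cstar = A.mulVec c)
    (hopt : ∀ z : Fin N → ℝ, A.mulVec z = A.mulVec c → ∑ i, |cstar i| ≤ ∑ i, |z i|) :
    ∀ i ∉ T, cstar i = 0 := by
  set g : Fin N → ℝ := fun i => ∑ r, A r i * ν r with hg
  have key : ∀ v : Fin N → ℝ, ∑ i, g i * v i = ∑ r, ν r * A.mulVec v r := by
    intro v
    simp only [hg, Matrix.mulVec, dotProduct, Finset.sum_mul, Finset.mul_sum]
    rw [Finset.sum_comm]
    apply Finset.sum_congr rfl; intro r _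
    apply Finset.sum_congr rfl; intro i _
    ring
  -- |g i| ≤ 1 for all i
  have hgle : ∀ i, |g i| ≤ 1 := by
    intro i
    by_cases hc : c i = 0
    · by_cases hT : i ∈ T
      · exact h2 i hT hc
      · exact (h3 i hT).le
    · rw [show g i = Real.sign (c i) from h1 i hc]
      rcases lt_trichotomy (c i) 0 with h | h | h
      · rw [Real.sign_of_neg h]; norm_num
      · exact absurd h hc
      · rw [Real.sign_of_pos h]; norm_num
  -- ∑ g i * c i = ∑ |c i|
  have hgc : ∑ i, g i * c i = ∑ i, |c i| := by
    apply Finset.sum_congr rfl; intro i _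
    by_cases hc : c i = 0
    · simp [hc]
    · rw [show g i = Real.sign (c i) from h1 i hc]
      rcases lt_trichotomy (c i) 0 with h | h | h
      · rw [Real.sign_of_neg h, abs_of_neg h]; ring
      · exact absurd h hc
      · rw [Real.sign_of_pos h, abs_of_pos h]; ring
  have hmain : ∑ i, g i * cstar i = ∑ i, |c i| := by
    rw [key cstar, hfeas, ← key c, hgc]
  -- pointwise bound
  have hpt : ∀ i ∈ Finset.univ, g i * cstar i ≤ |cstar i| := by
    intro i _
    calc g i * cstar i ≤ |g i * cstar i| := le_abs_self _
      _ = |g i| * |cstar i| := abs_mul _ _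
      _ ≤ 1 * |cstar i| := by
          exact mul_le_mul_of_nonneg_right (hgle i) (abs_nonneg _)
      _ = |cstar i| := one_mul _
  have hsum : ∑ i, |cstar i| ≤ ∑ i, g i * cstar i := by
    rw [hmain]; exact hopt c rfl
  have heq : ∀ i ∈ Finset.univ, g i * cstar i = |cstar i| := by
    have := (Finset.sum_eq_sum_iff_of_le hpt).mp
      (le_antisymm (Finset.sum_le_sum hpt) hsum)
    intro i hi; exact this i hi
  intro i hi
  by_contra hne
  have h0 : (0:ℝ) < |cstar i| := abs_pos.mpr hne
  have : g i * cstar i < |cstar i| := by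
    calc g i * cstar i ≤ |g i| * |cstar i| := by
          rw [← abs_mul]; exact le_abs_self _
      _ < 1 * |cstar i| := by
          exact mul_lt_mul_of_pos_right (h3 i hi) h0
      _ = |cstar i| := one_mul _
  exact absurd (heq i (Finset.mem_univ i)) this.ne
end

section
/- Let V^{(ℓ)} ∈ ℝ^{p×d_ℓ} have full column rank and let x_j^{(k)} = V^{(k)} a_j^{(k)} for matrices V^{(k)} ∈ ℝ^{p×d_k} and vectors a_j^{(k)} ∈ ℝ^{d_k}. Let λ ∈ ℝ^{d_ℓ} be a nonzero vector with ‖A^ᵀλ‖_∞ ≤ 1 for a matrix A ∈ ℝ^{d_ℓ×n} of full row rank, and set ν = ((V^{(ℓ)})ᵀ)^† λ. If |⟨(λ/‖λ‖₂), (V^{(ℓ)})^† V^{(k)} a_j^{(k)}⟩| < r(P(A)) for all k ≠ ℓ and all j, then |⟨x_j^{(k)}, ν⟩| < 1 for all k ≠ ℓ and all j, where r(P(A)) is the inradius of the symmetrized convex hull of the columns of A. -/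
open Matrix

noncomputable def l2 {ι : Type*} [Fintype ι] (x : ι → ℝ) : ℝ :=
  Real.sqrt (∑ i, x i ^ 2)

noncomputable def symmHull {m n : ℕ} (A : Matrix (Fin m) (Fin n) ℝ) : Set (Fin m → ℝ) :=
  convexHull ℝ {x | ∃ j : Fin n, x = (fun i => A i j) ∨ x = -(fun i => A i j)}

noncomputable def inradius {m : ℕ} (K : Set (Fin m → ℝ)) : ℝ :=
  sSup {r | 0 ≤ r ∧ ∃ c : Fin m → ℝ, {x | l2 (x - c) ≤ r} ⊆ K}


lemma l2_pos {ι : Type*} [Fintype ι] {x : ι → ℝ} (hx : x ≠ 0) : 0 < l2 x := by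
  have : ∃ i, x i ≠ 0 := by
    by_contra h
    push_neg at h
    exact hx (funext h)
  obtain ⟨i, hi⟩ := this
  have hLS : 0 < ∑ j, x j ^ 2 :=
    Finset.sum_pos' (fun _ _ => sq_nonneg _) ⟨i, Finset.mem_univ i, by positivity⟩
  exact Real.sqrt_pos.mpr hLS

lemma inradius_le_aux {m n : ℕ} (A : Matrix (Fin m) (Fin n) ℝ) (lam : Fin m → ℝ)
    (hlam : lam ≠ 0) (hfeas : ∀ i : Fin n, |∑ r, A r i * lam r| ≤ 1) :
    inradius (symmHull A) ≤ 1 / l2 lam := by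
  have hL : 0 < l2 lam := l2_pos hlam
  have hLS : l2 lam ^ 2 = ∑ j, lam j ^ 2 := Real.sq_sqrt (by positivity)
  set Lc := l2 lam with hLc
  -- the linear functional
  set f : (Fin m → ℝ) →ₗ[ℝ] ℝ :=
    { toFun := fun y => ∑ j, y j * lam j
      map_add' := by intro x y; simp [add_mul, Finset.sum_add_distrib]
      map_smul' := by intro c x; simp [Finset.mul_sum, mul_assoc] } with hf
  have hhull : ∀ y ∈ symmHull A, |f y| ≤ 1 := by
    intro y hy
    have hconv : Convex ℝ (f ⁻¹' Set.Icc (-1 : ℝ) 1) :=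
      (convex_Icc _ _).linear_preimage f
    have hsub : {x : Fin m → ℝ | ∃ j : Fin n, x = (fun i => A i j) ∨ x = -(fun i => A i j)}
        ⊆ f ⁻¹' Set.Icc (-1 : ℝ) 1 := by
      rintro x ⟨j, hj | hj⟩ <;> subst hj <;>
        · have := hfeas j
          rw [abs_le] at this
          simp only [hf, Set.mem_preimage, Set.mem_Icc, LinearMap.coe_mk, AddHom.coe_mk,
            Pi.neg_apply, neg_mul, Finset.sum_neg_distrib]
          constructor <;> nlinarith [this.1, this.2]
    have := convexHull_min hsub hconv hy
    rw [Set.mem_preimage, Set.mem_Icc] at this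
    exact abs_le.mpr this
  apply Real.sSup_le
  · rintro r ⟨hr0, c, hsub⟩
    set u : Fin m → ℝ := fun i => lam i / Lc with hu
    have hfu : f u = Lc := by
      simp only [hf, LinearMap.coe_mk, AddHom.coe_mk, hu]
      simp only [show ∀ j, lam j / Lc * lam j = (lam j ^ 2) / Lc from fun j => by ring]
      rw [← Finset.sum_div, ← hLS]
      rw [sq]
      field_simp
    have hmem : ∀ s : ℝ, s = 1 ∨ s = -1 → c + (s * r) • u ∈ symmHull A := by
      intro s hs
      apply hsub
      simp only [Set.mem_setOf_eq, add_sub_cancel_left]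
      have : l2 ((s * r) • u) = r := by
        simp only [l2, Pi.smul_apply, smul_eq_mul, hu]
        simp only [show ∀ j, (s * r * (lam j / Lc)) ^ 2 = (s^2 * r ^ 2 / Lc ^ 2) * lam j ^ 2
          from fun j => by ring]
        rw [← Finset.mul_sum, ← hLS]
        have hs2 : s ^ 2 = 1 := by rcases hs with h | h <;> simp [h]
        rw [hs2]
        rw [show 1 * r ^ 2 / Lc ^ 2 * Lc ^ 2 = r ^ 2 by field_simp]
        exact Real.sqrt_sq hr0
      exact le_of_eq this
    have h1 := hhull _ (hmem 1 (Or.inl rfl))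
    have h2 := hhull _ (hmem (-1) (Or.inr rfl))
    rw [abs_le] at h1 h2
    have e1 : f (c + (1 * r) • u) = f c + r * Lc := by
      rw [map_add, f.map_smul, hfu, smul_eq_mul]; ring_nf
    have e2 : f (c + ((-1) * r) • u) = f c - r * Lc := by
      rw [map_add, f.map_smul, hfu, smul_eq_mul]; ring_nf
    rw [e1] at h1; rw [e2] at h2
    rw [le_div_iff₀ hL]
    linarith [h1.2, h2.1]
  · positivity

theorem stmt17 {L p nA : ℕ} (l : Fin L) (d : Fin L → ℕ) (n : Fin L → ℕ)
    (V : ∀ k : Fin L, Matrix (Fin p) (Fin (d k)) ℝ)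
    (hVl : (V l).rank = d l)
    (a : ∀ k : Fin L, Fin (n k) → (Fin (d k) → ℝ))
    (lam : Fin (d l) → ℝ) (hlam : lam ≠ 0)
    (A : Matrix (Fin (d l)) (Fin nA) ℝ) (hA : A.rank = d l)
    (hfeas : ∀ i : Fin nA, |∑ r, A r i * lam r| ≤ 1)
    (hcond : ∀ k : Fin L, k ≠ l → ∀ j : Fin (n k),
      |∑ r, lam r / l2 lam *
          ((((V l)ᵀ * V l)⁻¹ * (V l)ᵀ * V k).mulVec (a k j)) r| <
        inradius (symmHull A)) :
    ∀ k : Fin L, k ≠ l → ∀ j : Fin (n k),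
      |∑ r, ((V k).mulVec (a k j)) r *
          ((V l * ((V l)ᵀ * V l)⁻¹).mulVec lam) r| < 1 := by
  intro k hk j
  have hL : 0 < l2 lam := l2_pos hlam
  set M := ((V l)ᵀ * V l)⁻¹ with hM
  have hMsymm : Mᵀ = M := by
    rw [hM, Matrix.transpose_nonsing_inv, Matrix.transpose_mul, Matrix.transpose_transpose]
  -- rewrite the target as lam ⬝ᵥ (C.mulVec a)
  have key : ∑ r, ((V k).mulVec (a k j)) r * ((V l * M).mulVec lam) r
      = ∑ r, lam r * ((M * (V l)ᵀ * V k).mulVec (a k j)) r := by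
    have h1 : ((V k).mulVec (a k j)) ⬝ᵥ ((V l * M).mulVec lam)
        = ((V l * M)ᵀ.mulVec ((V k).mulVec (a k j))) ⬝ᵥ lam := by
      rw [Matrix.dotProduct_mulVec, ← Matrix.mulVec_transpose]
    have h2 : (V l * M)ᵀ = M * (V l)ᵀ := by
      rw [Matrix.transpose_mul, hMsymm]
    calc ∑ r, ((V k).mulVec (a k j)) r * ((V l * M).mulVec lam) r
        = ((V k).mulVec (a k j)) ⬝ᵥ ((V l * M).mulVec lam) := rfl
      _ = ((V l * M)ᵀ.mulVec ((V k).mulVec (a k j))) ⬝ᵥ lam := h1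
      _ = ((M * (V l)ᵀ * V k).mulVec (a k j)) ⬝ᵥ lam := by
          rw [h2, Matrix.mulVec_mulVec]
      _ = ∑ r, lam r * ((M * (V l)ᵀ * V k).mulVec (a k j)) r := by
          rw [dotProduct_comm]; rfl
  rw [key]
  have hc := hcond k hk j
  have hsum : ∑ r, lam r / l2 lam * ((M * (V l)ᵀ * V k).mulVec (a k j)) r
      = (1 / l2 lam) * ∑ r, lam r * ((M * (V l)ᵀ * V k).mulVec (a k j)) r := by
    rw [Finset.mul_sum]
    exact Finset.sum_congr rfl fun r _ => by ring
  rw [hsum] at hc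
  set T := ∑ r, lam r * ((M * (V l)ᵀ * V k).mulVec (a k j)) r with hT
  have hle := inradius_le_aux A lam hlam hfeas
  have h1 : |T| / l2 lam < inradius (symmHull A) := by
    rw [abs_mul, abs_of_pos (by positivity : (0:ℝ) < 1 / l2 lam)] at hc
    calc |T| / l2 lam = 1 / l2 lam * |T| := by ring
      _ < _ := hc
  have h2 : |T| < inradius (symmHull A) * l2 lam := (div_lt_iff₀ hL).mp h1
  calc |T| < inradius (symmHull A) * l2 lam := h2
    _ ≤ (1 / l2 lam) * l2 lam := mul_le_mul_of_nonneg_right hle hL.le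
    _ = 1 := by field_simp
end
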